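/- Let K be an ultrametric field of positive residue characteristic such that λ ∈ K satisfies |λ| = 1, the reduction of λ has finite order q in the residue field, and λ^q ≠ 1. Suppose moreover K has positive characteristic p. Then for every power series f(z) = λz + ... in O_K[[z]], there exists r > 0 such that every periodic point of f in m_K \ {0} has absolute value at least r; in fact every periodic point z₀ ≠ 0 satisfies |z₀| ≥ |λ^q − 1|^{(p−1)/(q p)} or |z₀| ≥ |λ^q − 1|^{1/q}. In particular, the irrationally indifferent fixed point z = 0 is isolated as a periodic point. -/

import Mathlib

/-!
Put `δ = ‖λ^q - 1‖` and `θ = δ^(1/q)`; we show `‖z₀‖ ≥ θ` for every periodic point `z₀ ≠ 0`.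
If `z₀` has period `ℓ`, it is a zero of `W = f^∘ℓ - z`, which is impossible for `‖z₀‖ < θ` as
soon as the linear term of `W` dominates its Gauss norm at radius `θ`.

If `q ∤ ℓ`, then `W'(0) = λ^ℓ - 1` is a unit and this is clear. If `ℓ = q p^n k` with `p ∤ k`,
let `g = f^∘q`. As `g` commutes with `f` and `g'(0) = λ^q ≡ 1 mod δ`, comparing coefficients
of `f ∘ g` and `g ∘ f` gives `g_i ≡ 0 mod δ` for `2 ≤ i ≤ q` (because `λ^(i-1) - 1` is a unit),
hence `‖g - z‖_θ ≤ δ θ`. For `T u = u ∘ g` this makes `T - 1` contract Gauss norms at radius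
`θ` by the factor `δ`, and in characteristic `p`
`W = (T^(p^n k) - 1) z = ∑_{i<k} T^(p^n i) (T - 1)^(p^n) z`, so `‖W‖_θ ≤ δ^(p^n) θ`,
whereas `|W'(0)| = |λ^(qk) - 1|^(p^n) = δ^(p^n)` because `|k| = 1`.
-/

open PowerSeries

/-- Formal composition `f ∘ g` of power series (correct when `g` has zero constant term). -/
noncomputable def fcomp {K : Type*} [CommRing K] (f g : PowerSeries K) : PowerSeries K :=
  PowerSeries.mk fun n =>
    ∑ m ∈ Finset.range (n + 1), (PowerSeries.coeff m f) * (PowerSeries.coeff n (g ^ m))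

/-- `m`-th iterate of a power series with zero constant term. -/
noncomputable def fit {K : Type*} [CommRing K] (g : PowerSeries K) : ℕ → PowerSeries K
  | 0 => PowerSeries.X
  | n + 1 => fcomp g (fit g n)

open Finset IsUltrametricDist

section Composition

variable {R : Type*} [CommRing R]

theorem coeff_pow_eq_zero_of_lt {g : R⟦X⟧} (hg : constantCoeff g = 0) {m n : ℕ} (h : n < m) :
    coeff n (g ^ m) = 0 :=
  X_pow_dvd_iff.mp (pow_dvd_pow_of_dvd (X_dvd_iff.mpr hg) m) n h

theorem coeff_pow_self {u : R⟦X⟧} (hu : constantCoeff u = 0) (m : ℕ) :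
    coeff m (u ^ m) = coeff 1 u ^ m := by
  obtain ⟨v, rfl⟩ := X_dvd_iff.mpr hu
  simp [mul_pow, coeff_X_pow_mul', coeff_zero_eq_constantCoeff]

theorem coeff_fcomp (f g : R⟦X⟧) (n : ℕ) :
    coeff n (fcomp f g) = ∑ m ∈ range (n + 1), coeff m f * coeff n (g ^ m) := by
  simp [fcomp]

theorem coeff_fcomp_sub_fcomp (f g h : R⟦X⟧) (n : ℕ) :
    coeff n (fcomp f g - fcomp f h)
      = ∑ m ∈ range (n + 1), coeff m f * (coeff n (g ^ m) - coeff n (h ^ m)) := by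
  simp [coeff_fcomp, mul_sub]

theorem fcomp_eq_subst (f : R⟦X⟧) {g : R⟦X⟧} (hg : constantCoeff g = 0) :
    fcomp f g = f.subst g := by
  ext n
  rw [coeff_fcomp, coeff_subst' (HasSubst.of_constantCoeff_zero' hg)]
  refine (finsum_eq_sum_of_support_subset _ fun d hd => ?_).symm
  by_contra hdn
  simp only [coe_range, Set.mem_Iio, not_lt] at hdn
  exact hd (by simp [coeff_pow_eq_zero_of_lt hg (Nat.lt_of_succ_le hdn)])

theorem fcomp_X (f : R⟦X⟧) : fcomp f X = f := by
  rw [fcomp_eq_subst f constantCoeff_X, X_subst]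

theorem constantCoeff_fit {f : R⟦X⟧} (hf0 : constantCoeff f = 0) :
    ∀ n, constantCoeff (fit f n) = 0
  | 0 => constantCoeff_X
  | n + 1 => by
    rw [fit, ← coeff_zero_eq_constantCoeff_apply, coeff_fcomp]
    simp [hf0]

theorem fit_one (f : R⟦X⟧) : fit f 1 = f :=
  fcomp_X f

theorem fit_add {f : R⟦X⟧} (hf0 : constantCoeff f = 0) (a b : ℕ) :
    fit f (a + b) = fcomp (fit f a) (fit f b) := by
  have hb := HasSubst.of_constantCoeff_zero' (constantCoeff_fit hf0 b)
  rw [fcomp_eq_subst _ (constantCoeff_fit hf0 b)]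
  induction a with
  | zero => rw [zero_add, fit, subst_X hb]
  | succ a ih =>
    rw [add_right_comm, fit, fit, fcomp_eq_subst _ (constantCoeff_fit hf0 _), ih,
      fcomp_eq_subst _ (constantCoeff_fit hf0 _),
      subst_comp_subst_apply (HasSubst.of_constantCoeff_zero' (constantCoeff_fit hf0 a)) hb]

theorem fit_mul {f : R⟦X⟧} (hf0 : constantCoeff f = 0) (a b : ℕ) :
    fit f (a * b) = fit (fit f a) b := by
  induction b with
  | zero => rfl
  | succ b ih =>
    rw [mul_add_one, fit_add hf0, ih, fit_add (constantCoeff_fit hf0 a), fit_one]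

theorem coeff_one_fcomp {f : R⟦X⟧} (hf0 : constantCoeff f = 0) (g : R⟦X⟧) :
    coeff 1 (fcomp f g) = coeff 1 f * coeff 1 g := by
  simp [coeff_fcomp, sum_range_succ, coeff_zero_eq_constantCoeff, hf0]

theorem coeff_one_fit {f : R⟦X⟧} (hf0 : constantCoeff f = 0) :
    ∀ n, coeff 1 (fit f n) = coeff 1 f ^ n
  | 0 => by simp [fit]
  | n + 1 => by rw [fit, coeff_one_fcomp hf0, coeff_one_fit hf0 n, pow_succ']

theorem fcomp_fit_comm {f : R⟦X⟧} (hf0 : constantCoeff f = 0) (n : ℕ) :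
    fcomp f (fit f n) = fcomp (fit f n) f := by
  have h1 := fit_add hf0 1 n
  have h2 := fit_add hf0 n 1
  rw [fit_one] at h1 h2
  rw [← h1, ← h2, add_comm]

end Composition

section GaussNorm

theorem norm_sum_mul_le_of_forall_le {M ι : Type*} [SeminormedAddCommGroup M]
    [IsUltrametricDist M] {s : Finset ι} {F : ι → M} {t C : ℝ} (ht : 0 ≤ t) (hC : 0 ≤ C)
    (h : ∀ i ∈ s, ‖F i‖ * t ≤ C) : ‖∑ i ∈ s, F i‖ * t ≤ C := by
  rcases ht.eq_or_lt with rfl | ht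
  · simpa using hC
  rw [← le_div_iff₀ ht]
  exact norm_sum_le_of_forall_le_of_nonneg (by positivity) fun i hi => (le_div_iff₀ ht).2 (h i hi)

variable {K : Type*} [NormedField K] {θ B C D : ℝ} {u v w : K⟦X⟧}

/-- `gaussNorm ‖·‖ θ u ≤ C`, stated without the supremum; `GaussNormLE 1 1 u` means
`u ∈ O_K⟦X⟧`. -/
def GaussNormLE (θ C : ℝ) (u : K⟦X⟧) : Prop :=
  ∀ j, ‖coeff j u‖ * θ ^ j ≤ C

theorem gaussNormLE_one_iff : GaussNormLE 1 C u ↔ ∀ j, ‖coeff j u‖ ≤ C := by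
  simp [GaussNormLE]

theorem GaussNormLE.nonneg (hu : GaussNormLE θ C u) : 0 ≤ C :=
  (norm_nonneg _).trans (by simpa using hu 0)

theorem GaussNormLE.mono (hu : GaussNormLE θ C u) (hCD : C ≤ D) : GaussNormLE θ D u :=
  fun j => (hu j).trans hCD

theorem gaussNormLE_zero (hC : 0 ≤ C) : GaussNormLE θ C (0 : K⟦X⟧) := by
  simpa [GaussNormLE] using hC

theorem gaussNormLE_one : GaussNormLE θ 1 (1 : K⟦X⟧) := by
  intro j
  rcases eq_or_ne j 0 with rfl | hj
  · simp
  · simp [coeff_one, hj]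

theorem gaussNormLE_X (hθ : 0 ≤ θ) : GaussNormLE θ θ (X : K⟦X⟧) := by
  intro j
  rcases eq_or_ne j 1 with rfl | hj
  · simp
  · simpa [coeff_X, hj] using hθ

theorem gaussNormLE_of_norm_coeff_le {q : ℕ} (hθ0 : 0 ≤ θ) (hθ1 : θ ≤ 1)
    (hu0 : constantCoeff u = 0) (hu : GaussNormLE 1 1 u) (hlow : ∀ j ≤ q, ‖coeff j u‖ ≤ θ ^ q) :
    GaussNormLE θ (θ ^ q * θ) u := by
  intro j
  rcases Nat.eq_zero_or_pos j with rfl | hj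
  · simpa [coeff_zero_eq_constantCoeff, hu0] using by positivity
  rcases le_or_gt j q with hjq | hqj
  · exact mul_le_mul (hlow j hjq) (pow_le_of_le_one hθ0 hθ1 hj.ne') (by positivity) (by positivity)
  · calc ‖coeff j u‖ * θ ^ j ≤ 1 * θ ^ (q + 1) :=
          mul_le_mul (gaussNormLE_one_iff.1 hu j) (pow_le_pow_of_le_one hθ0 hθ1 hqj)
            (by positivity) zero_le_one
      _ = θ ^ q * θ := by ring

variable [IsUltrametricDist K]

theorem GaussNormLE.add (hθ : 0 ≤ θ) (hu : GaussNormLE θ C u) (hv : GaussNormLE θ C v) :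
    GaussNormLE θ C (u + v) := fun j =>
  calc ‖coeff j (u + v)‖ * θ ^ j ≤ max ‖coeff j u‖ ‖coeff j v‖ * θ ^ j := by
        rw [map_add]; gcongr; exact norm_add_le_max _ _
    _ = max (‖coeff j u‖ * θ ^ j) (‖coeff j v‖ * θ ^ j) := max_mul_of_nonneg _ _ (by positivity)
    _ ≤ C := max_le (hu j) (hv j)

theorem GaussNormLE.sub (hθ : 0 ≤ θ) (hu : GaussNormLE θ C u) (hv : GaussNormLE θ C v) :
    GaussNormLE θ C (u - v) := by
  rw [sub_eq_add_neg]
  exact hu.add hθ fun j => by simpa using hv j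

theorem GaussNormLE.sum {ι : Type*} {s : Finset ι} {F : ι → K⟦X⟧} (hθ : 0 ≤ θ) (hC : 0 ≤ C)
    (hF : ∀ i ∈ s, GaussNormLE θ C (F i)) : GaussNormLE θ C (∑ i ∈ s, F i) := by
  classical
  induction s using Finset.induction_on with
  | empty => simpa using gaussNormLE_zero hC
  | insert a s ha ih =>
    rw [sum_insert ha]
    exact (hF a (mem_insert_self a s)).add hθ (ih fun i hi => hF i (mem_insert_of_mem hi))

theorem GaussNormLE.mul (hθ : 0 ≤ θ) (hu : GaussNormLE θ C u) (hv : GaussNormLE θ D v) :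
    GaussNormLE θ (C * D) (u * v) := by
  intro j
  rw [coeff_mul]
  refine norm_sum_mul_le_of_forall_le (by positivity) (mul_nonneg hu.nonneg hv.nonneg) ?_
  rintro ⟨a, b⟩ hab
  rw [HasAntidiagonal.mem_antidiagonal] at hab
  dsimp only
  rw [norm_mul, ← hab, pow_add]
  calc ‖coeff a u‖ * ‖coeff b v‖ * (θ ^ a * θ ^ b)
      = (‖coeff a u‖ * θ ^ a) * (‖coeff b v‖ * θ ^ b) := by ring
    _ ≤ C * D := mul_le_mul (hu a) (hv b) (by positivity) hu.nonneg

theorem GaussNormLE.pow (hθ : 0 ≤ θ) (hu : GaussNormLE θ C u) (n : ℕ) :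
    GaussNormLE θ (C ^ n) (u ^ n) := by
  induction n with
  | zero => simpa using gaussNormLE_one
  | succ n ih => simpa [pow_succ] using ih.mul hθ hu

theorem GaussNormLE.norm_sum_coeff_mul_le {P : ℕ → K⟦X⟧} (hθ : 0 ≤ θ) (hB : 0 ≤ B)
    (hw : GaussNormLE θ C w) (hP : ∀ m, GaussNormLE θ (B * θ ^ m) (P m)) (j : ℕ) :
    ‖∑ m ∈ range (j + 1), coeff m w * coeff j (P m)‖ * θ ^ j ≤ C * B := by
  refine norm_sum_mul_le_of_forall_le (by positivity) (mul_nonneg hw.nonneg hB) fun m _ => ?_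
  calc ‖coeff m w * coeff j (P m)‖ * θ ^ j = ‖coeff m w‖ * (‖coeff j (P m)‖ * θ ^ j) := by
        rw [norm_mul, mul_assoc]
    _ ≤ ‖coeff m w‖ * (B * θ ^ m) := mul_le_mul_of_nonneg_left (hP m j) (norm_nonneg _)
    _ = (‖coeff m w‖ * θ ^ m) * B := by ring
    _ ≤ C * B := mul_le_mul_of_nonneg_right (hw m) hB

theorem gaussNormLE_fcomp (hθ : 0 ≤ θ) (hw : GaussNormLE θ C w) (hv : GaussNormLE θ θ v) :
    GaussNormLE θ C (fcomp w v) := fun j => by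
  simpa [coeff_fcomp] using
    GaussNormLE.norm_sum_coeff_mul_le hθ zero_le_one hw (fun m => by simpa using hv.pow hθ m) j

theorem gaussNormLE_fcomp_sub_fcomp (hθ : 0 ≤ θ) (hB : 0 ≤ B) (hw : GaussNormLE θ C w)
    {g h : K⟦X⟧} (hgh : ∀ m, GaussNormLE θ (B * θ ^ m) (g ^ m - h ^ m)) :
    GaussNormLE θ (C * B) (fcomp w g - fcomp w h) := fun j => by
  simpa [coeff_fcomp_sub_fcomp] using GaussNormLE.norm_sum_coeff_mul_le hθ hB hw hgh j

theorem GaussNormLE.add_pow_sub_pow (hθ : 0 < θ) (hB : B ≤ 1) {e : K⟦X⟧}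
    (he : GaussNormLE θ (B * θ) e) (m : ℕ) : GaussNormLE θ (B * θ ^ m) ((X + e) ^ m - X ^ m) := by
  have hB0 : 0 ≤ B := nonneg_of_mul_nonneg_left he.nonneg hθ
  have hXe : GaussNormLE θ θ (X + e) :=
    (gaussNormLE_X hθ.le).add hθ.le (he.mono (mul_le_of_le_one_left hθ.le hB))
  induction m with
  | zero => simpa using gaussNormLE_zero hB0
  | succ m ih =>
    have h : (X + e) ^ (m + 1) - X ^ (m + 1) = (X + e) * ((X + e) ^ m - X ^ m) + e * X ^ m := by
      ring
    rw [h, show B * θ ^ (m + 1) = θ * (B * θ ^ m) by ring]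
    exact (hXe.mul hθ.le ih).add hθ.le
      ((he.mul hθ.le ((gaussNormLE_X hθ.le).pow hθ.le m)).mono (le_of_eq (by ring)))

theorem gaussNormLE_fit (hθ : 0 ≤ θ) {f : K⟦X⟧} (hf : GaussNormLE θ θ f) :
    ∀ n, GaussNormLE θ θ (fit f n)
  | 0 => gaussNormLE_X hθ
  | n + 1 => gaussNormLE_fcomp hθ hf (gaussNormLE_fit hθ hf n)

end GaussNorm

section Iterates

variable {K : Type*} [NormedField K] [IsUltrametricDist K] {θ B C : ℝ} {g : K⟦X⟧}

theorem gaussNormLE_fcomp_sub_self (hθ : 0 < θ) (hB : B ≤ 1)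
    (hg : GaussNormLE θ (B * θ) (g - X)) {u : K⟦X⟧} (hu : GaussNormLE θ C u) :
    GaussNormLE θ (C * B) (fcomp u g - u) := by
  have hB0 : 0 ≤ B := nonneg_of_mul_nonneg_left hg.nonneg hθ
  simpa [fcomp_X] using gaussNormLE_fcomp_sub_fcomp hθ.le hB0 hu (h := X)
    fun m => by simpa using hg.add_pow_sub_pow hθ hB m

theorem gaussNormLE_fit_sub_X (p : ℕ) [Fact p.Prime] [CharP K p] (hθ : 0 < θ) (hB : B ≤ 1)
    (hg0 : constantCoeff g = 0) (hg : GaussNormLE θ (B * θ) (g - X)) (n k : ℕ) :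
    GaussNormLE θ (B ^ p ^ n * θ) (fit g (p ^ n * k) - X) := by
  set T : Module.End K K⟦X⟧ := (substAlgHom (HasSubst.of_constantCoeff_zero' hg0)).toLinearMap
  have hT (u : K⟦X⟧) : T u = fcomp u g := by
    simp [T, coe_substAlgHom, fcomp_eq_subst _ hg0]
  have hTX (m : ℕ) : (T ^ m) X = fit g m := by
    induction m with
    | zero => rfl
    | succ m ih => rw [pow_succ', Module.End.mul_apply, ih, hT, fit_add hg0, fit_one]
  have hsub {C : ℝ} {u : K⟦X⟧} (hu : GaussNormLE θ C u) (j : ℕ) :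
      GaussNormLE θ (C * B ^ j) (((T - 1) ^ j) u) := by
    induction j with
    | zero => simpa using hu
    | succ j ih =>
      rw [pow_succ' (T - 1), Module.End.mul_apply, LinearMap.sub_apply, Module.End.one_apply, hT,
        pow_succ, ← mul_assoc]
      exact gaussNormLE_fcomp_sub_self hθ hB hg ih
  have hpres {C : ℝ} {u : K⟦X⟧} (hu : GaussNormLE θ C u) (i : ℕ) :
      GaussNormLE θ C ((T ^ i) u) := by
    induction i with
    | zero => simpa using hu
    | succ i ih =>
      rw [pow_succ', Module.End.mul_apply, hT, ← add_sub_cancel ((T ^ i) u) (fcomp _ g)]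
      exact ih.add hθ.le ((gaussNormLE_fcomp_sub_self hθ hB hg ih).mono
        (mul_le_of_le_one_right ih.nonneg hB))
  have : CharP (Module.End K K⟦X⟧) p :=
    charP_of_injective_algebraMap (algebraMap K _).injective p
  have hsplit :
      fit g (p ^ n * k) - X = ∑ i ∈ range k, ((T ^ p ^ n) ^ i) (((T - 1) ^ p ^ n) X) := by
    rw [← LinearMap.sum_apply, ← Module.End.mul_apply,
      sub_pow_char_pow_of_commute p n (Commute.one_right T), one_pow, geom_sum_mul, ← pow_mul,
      LinearMap.sub_apply, hTX, Module.End.one_apply]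
  have hX := hsub (gaussNormLE_X hθ.le) (p ^ n)
  rw [hsplit, mul_comm]
  exact GaussNormLE.sum hθ.le hX.nonneg fun i _ => by rw [← pow_mul]; exact hpres hX _

end Iterates

section Commuting

variable {K : Type*} [NormedField K] [IsUltrametricDist K] {δ : ℝ} {i : ℕ} {f g : K⟦X⟧}

theorem norm_sum_sub_le_of_forall_ne {ι : Type*} [DecidableEq ι] {s : Finset ι} {F : ι → K}
    {a : ι} (ha : a ∈ s) (hδ : 0 ≤ δ) (h : ∀ m ∈ s, m ≠ a → ‖F m‖ ≤ δ) :
    ‖∑ m ∈ s, F m - F a‖ ≤ δ := by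
  rw [← sum_erase_eq_sub ha]
  exact norm_sum_le_of_forall_le_of_nonneg hδ fun m hm =>
    h m (mem_of_mem_erase hm) (ne_of_mem_erase hm)

theorem norm_coeff_mul_le {u v : K⟦X⟧} (hδ : 0 ≤ δ) (hu : ∀ a < i, ‖coeff a u‖ ≤ δ)
    (hv : GaussNormLE 1 1 v) (hv0 : constantCoeff v = 0) : ‖coeff i (u * v)‖ ≤ δ := by
  rw [coeff_mul]
  refine norm_sum_le_of_forall_le_of_nonneg hδ fun ⟨a, b⟩ hab => ?_
  rw [HasAntidiagonal.mem_antidiagonal] at hab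
  rcases Nat.eq_zero_or_pos b with rfl | hb
  · simp [coeff_zero_eq_constantCoeff, hv0, hδ]
  · rw [norm_mul]
    exact (mul_le_of_le_one_right (norm_nonneg _) (gaussNormLE_one_iff.1 hv b)).trans
      (hu a (by simp only at hab; omega))

theorem norm_coeff_pow_sub_X_pow_le {m : ℕ} (hδ : 0 ≤ δ) (hg : GaussNormLE 1 1 g)
    (hg0 : constantCoeff g = 0) (he : ∀ a < i, ‖coeff a (g - X)‖ ≤ δ) (hm : 2 ≤ m) :
    ‖coeff i (g ^ m - X ^ m)‖ ≤ δ := by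
  rw [← geom_sum₂_mul, mul_comm]
  refine norm_coeff_mul_le hδ he (GaussNormLE.sum zero_le_one zero_le_one fun a _ => ?_) ?_
  · simpa using (hg.pow zero_le_one a).mul zero_le_one ((gaussNormLE_X zero_le_one).pow
      zero_le_one (m - 1 - a))
  · simp only [map_sum, map_mul, map_pow, hg0, constantCoeff_X]
    refine sum_eq_zero fun a ha => ?_
    rcases Nat.eq_zero_or_pos a with rfl | ha0
    · simp [show m - 1 ≠ 0 by omega]
    · simp [ha0.ne']

theorem norm_coeff_fcomp_sub_sub_le_of_inner (hδ : 0 ≤ δ) (hf : GaussNormLE 1 1 f)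
    (hg : GaussNormLE 1 1 g) (hg0 : constantCoeff g = 0) (he : ∀ a < i, ‖coeff a (g - X)‖ ≤ δ)
    (hi : 2 ≤ i) : ‖coeff i (fcomp f g - f) - coeff 1 f * coeff i g‖ ≤ δ := by
  have h1 : coeff 1 f * coeff i g = coeff 1 f * (coeff i (g ^ 1) - coeff i (X ^ 1 : K⟦X⟧)) := by
    simp [coeff_X, show i ≠ 1 by omega]
  nth_rw 2 [← fcomp_X f]
  rw [coeff_fcomp_sub_fcomp, h1]
  refine norm_sum_sub_le_of_forall_ne (by simp; omega) hδ fun m _ hm1 => ?_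
  rcases Nat.lt_or_ge m 2 with hm | hm
  · obtain rfl : m = 0 := by omega
    simp [hδ]
  · rw [norm_mul]
    exact (mul_le_of_le_one_left (norm_nonneg _) (gaussNormLE_one_iff.1 hf m)).trans
      (norm_coeff_pow_sub_X_pow_le hδ hg hg0 he hm)

theorem norm_coeff_fcomp_sub_sub_le_of_outer (hδ : 0 ≤ δ) (hf : GaussNormLE 1 1 f)
    (hf0 : constantCoeff f = 0) (he : ∀ a < i, ‖coeff a (g - X)‖ ≤ δ) (hi : 2 ≤ i) :
    ‖coeff i (fcomp g f - f) - coeff 1 f ^ i * coeff i g‖ ≤ δ := by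
  have h1 : fcomp g f - f = fcomp (g - X) f := by
    rw [fcomp_eq_subst _ hf0, fcomp_eq_subst _ hf0,
      subst_sub (HasSubst.of_constantCoeff_zero' hf0),
      subst_X (HasSubst.of_constantCoeff_zero' hf0)]
  have h2 : coeff 1 f ^ i * coeff i g = coeff i (g - X) * coeff i (f ^ i) := by
    simp [coeff_X, show i ≠ 1 by omega, coeff_pow_self hf0, mul_comm]
  rw [h1, coeff_fcomp, h2]
  refine norm_sum_sub_le_of_forall_ne (by simp) hδ fun m hm hmi => ?_
  rw [norm_mul]
  exact (mul_le_of_le_one_right (norm_nonneg _) (gaussNormLE_one_iff.1 (hf.pow zero_le_one m) i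
    |>.trans_eq (one_pow m))).trans (he m (by simp at hm; omega))

theorem norm_coeff_le_of_fcomp_comm {lam : K} (hlam : ‖lam‖ = 1)
    (hunit : ‖lam ^ (i - 1) - 1‖ = 1) (hf : GaussNormLE 1 1 f) (hf0 : constantCoeff f = 0)
    (hf1 : coeff 1 f = lam) (hg : GaussNormLE 1 1 g) (hg0 : constantCoeff g = 0)
    (hcomm : fcomp f g = fcomp g f) (hδ : 0 ≤ δ) (he : ∀ a < i, ‖coeff a (g - X)‖ ≤ δ)
    (hi : 2 ≤ i) : ‖coeff i g‖ ≤ δ := by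
  have h1 := norm_coeff_fcomp_sub_sub_le_of_inner hδ hf hg hg0 he hi
  have h2 := norm_coeff_fcomp_sub_sub_le_of_outer hδ hf hf0 he hi
  rw [hcomm, hf1] at h1
  rw [hf1] at h2
  have h3 : lam * coeff i g - lam ^ i * coeff i g = -(lam * (lam ^ (i - 1) - 1) * coeff i g) := by
    obtain ⟨j, rfl⟩ : ∃ j, i = j + 1 := ⟨i - 1, by omega⟩
    rw [Nat.add_sub_cancel, pow_succ']
    ring
  calc ‖coeff i g‖ = ‖lam * coeff i g - lam ^ i * coeff i g‖ := by
        rw [h3, norm_neg, norm_mul, norm_mul, hlam, hunit, one_mul, one_mul]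
    _ ≤ max ‖lam * coeff i g - coeff i (fcomp g f - f)‖
          ‖coeff i (fcomp g f - f) - lam ^ i * coeff i g‖ := by
        simpa only [dist_eq_norm] using
          IsUltrametricDist.dist_triangle_max (lam * coeff i g) (coeff i (fcomp g f - f)) _
    _ ≤ δ := max_le (by rwa [norm_sub_rev]) h2

theorem norm_coeff_sub_X_le_of_fcomp_comm {lam : K} {q : ℕ} (hlam : ‖lam‖ = 1)
    (hord : ∀ j, 0 < j → j < q → ‖lam ^ j - 1‖ = 1) (hf : GaussNormLE 1 1 f)
    (hf0 : constantCoeff f = 0) (hf1 : coeff 1 f = lam) (hg : GaussNormLE 1 1 g)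
    (hg0 : constantCoeff g = 0) (hg1 : coeff 1 g = lam ^ q) (hcomm : fcomp f g = fcomp g f) :
    ∀ i ≤ q, ‖coeff i (g - X)‖ ≤ ‖lam ^ q - 1‖ := by
  intro i
  induction i using Nat.strong_induction_on with
  | _ i ih =>
    intro hiq
    match i with
    | 0 => simp [coeff_zero_eq_constantCoeff, hg0]
    | 1 => simp [hg1]
    | i + 2 =>
      rw [map_sub, coeff_X, if_neg (by omega), sub_zero]
      exact norm_coeff_le_of_fcomp_comm hlam (hord (i + 1) (by omega) (by omega)) hf hf0 hf1 hg
        hg0 hcomm (norm_nonneg _) (fun a ha => ih a ha (by omega)) (by omega)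

end Commuting

section Multiplier

variable {K : Type*} [NormedField K] {x : K}

theorem norm_natCast_eq_one_of_not_dvd (p : ℕ) [Fact p.Prime] [CharP K p] {k : ℕ}
    (hk : ¬ p ∣ k) : ‖(k : K)‖ = 1 := by
  have hk' : (k : ZMod p) ≠ 0 := by rwa [Ne, ZMod.natCast_eq_zero_iff]
  have hpow : (k : K) ^ (p - 1) = 1 := by
    simpa using congrArg (ZMod.castHom dvd_rfl K) (ZMod.pow_card_sub_one_eq_one hk')
  refine (pow_eq_one_iff_of_nonneg (norm_nonneg _) ?_).1 (by rw [← norm_pow, hpow, norm_one])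
  have := (Fact.out : p.Prime).two_le
  omega

variable [IsUltrametricDist K]

theorem norm_sub_one_le_one (hx : ‖x‖ ≤ 1) : ‖x - 1‖ ≤ 1 := by
  rw [sub_eq_add_neg]
  exact (norm_add_le_max _ _).trans (max_le hx (by simp))

theorem norm_pow_sub_one_le (hx : ‖x‖ ≤ 1) (n : ℕ) : ‖x ^ n - 1‖ ≤ ‖x - 1‖ := by
  rw [← geom_sum_mul, norm_mul]
  refine mul_le_of_le_one_left (norm_nonneg _)
    (norm_sum_le_of_forall_le_of_nonneg zero_le_one fun i _ => ?_)
  rw [norm_pow]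
  exact pow_le_one₀ (norm_nonneg _) hx

theorem norm_pow_sub_one_eq_one_of_not_dvd {q j : ℕ} (hx : ‖x‖ = 1) (hq0 : 0 < q)
    (hq1 : ‖x ^ q - 1‖ < 1) (hq2 : ∀ j, 0 < j → j < q → ¬ ‖x ^ j - 1‖ < 1) (hj : ¬ q ∣ j) :
    ‖x ^ j - 1‖ = 1 := by
  have hr0 : 0 < j % q := Nat.pos_of_ne_zero fun h => hj (Nat.dvd_of_mod_eq_zero h)
  have hr : ‖x ^ (j % q) - 1‖ = 1 :=
    le_antisymm ((norm_pow_sub_one_le hx.le _).trans (norm_sub_one_le_one hx.le))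
      (not_lt.1 (hq2 _ hr0 (Nat.mod_lt j hq0)))
  have hsplit :
      x ^ j - 1 = x ^ (q * (j / q)) * (x ^ (j % q) - 1) + ((x ^ q) ^ (j / q) - 1) := by
    conv_lhs => rw [← Nat.div_add_mod j q]
    rw [pow_add, pow_mul]
    ring
  have hA : ‖x ^ (q * (j / q)) * (x ^ (j % q) - 1)‖ = 1 := by
    rw [norm_mul, norm_pow, hx, one_pow, one_mul, hr]
  have hB : ‖(x ^ q) ^ (j / q) - 1‖ < 1 :=
    (norm_pow_sub_one_le (by rw [norm_pow, hx, one_pow]) _).trans_lt hq1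
  rw [hsplit, norm_add_eq_max_of_norm_ne_norm (by rw [hA]; exact hB.ne'), hA, max_eq_left hB.le]

theorem norm_pow_sub_one_eq_of_norm_natCast_eq_one (hx : ‖x - 1‖ < 1) {k : ℕ}
    (hk : ‖(k : K)‖ = 1) : ‖x ^ k - 1‖ = ‖x - 1‖ := by
  have hx1 : ‖x‖ ≤ 1 := by
    simpa using (norm_add_le_max (x - 1) 1).trans (max_le hx.le norm_one.le)
  have hdiff : ‖∑ i ∈ range k, x ^ i - k‖ < 1 := by
    rw [show ∑ i ∈ range k, x ^ i - k = ∑ i ∈ range k, (x ^ i - 1) by simp [sum_sub_distrib]]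
    exact (norm_sum_le_of_forall_le_of_nonneg (norm_nonneg _) fun i _ =>
      norm_pow_sub_one_le hx1 i).trans_lt hx
  have hsum : ‖∑ i ∈ range k, x ^ i‖ = 1 := by
    rw [← add_sub_cancel (k : K) (∑ i ∈ range k, x ^ i),
      norm_add_eq_max_of_norm_ne_norm (by rw [hk]; exact hdiff.ne'), hk, max_eq_left hdiff.le]
  rw [← geom_sum_mul, norm_mul, hsum, one_mul]

end Multiplier

section Dominance

theorem norm_eq_of_hasSum_of_forall_ne_le {M ι : Type*} [NormedAddCommGroup M]
    [IsUltrametricDist M] [DecidableEq ι] {t : ι → M} {s : M} (hs : HasSum t s) {a : ι} {C : ℝ}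
    (hC : 0 ≤ C) (hb : ∀ m, m ≠ a → ‖t m‖ ≤ C) (ha : C < ‖t a‖) : ‖s‖ = ‖t a‖ := by
  have hle : ‖s - t a‖ ≤ C := by
    have h := (hs.update a 0).tsum_eq
    rw [zero_sub, neg_add_eq_sub] at h
    rw [← h]
    refine norm_tsum_le_of_forall_le_of_nonneg hC fun m => ?_
    rcases eq_or_ne m a with rfl | hm
    · simpa using hC
    · simpa [Function.update_of_ne hm] using hb m hm
  rw [← sub_add_cancel s (t a), norm_add_eq_max_of_norm_ne_norm (hle.trans_lt ha).ne,
    max_eq_right (hle.trans ha.le)]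

variable {K : Type*} [NormedField K] [IsUltrametricDist K]

def LinearDominant (θ : ℝ) (W : K⟦X⟧) : Prop :=
  constantCoeff W = 0 ∧ coeff 1 W ≠ 0 ∧ GaussNormLE θ (‖coeff 1 W‖ * θ) W

theorem LinearDominant.hasSum_ne_zero {θ : ℝ} {W : K⟦X⟧} (hW : LinearDominant θ W) {z : K}
    (hz0 : z ≠ 0) (hz : ‖z‖ < θ) {s : K} (hs : HasSum (fun m => coeff m W * z ^ m) s) :
    s ≠ 0 := by
  obtain ⟨hW0, hW1, hWθ⟩ := hW
  have hρ : 0 < ‖z‖ := norm_pos_iff.2 hz0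
  have hθ : 0 < θ := hρ.trans hz
  have hW1' : 0 < ‖coeff 1 W‖ := norm_pos_iff.2 hW1
  have hdom := norm_eq_of_hasSum_of_forall_ne_le hs (a := 1) (C := ‖coeff 1 W‖ * ‖z‖ ^ 2 / θ)
    (by positivity) ?_ ?_
  · intro hs0
    rw [hs0, norm_zero, norm_mul, pow_one] at hdom
    exact (mul_pos hW1' hρ).ne' hdom.symm
  · intro m hm
    rcases Nat.lt_or_ge m 2 with hm2 | hm2
    · obtain rfl : m = 0 := by omega
      simpa [coeff_zero_eq_constantCoeff, hW0] using by positivity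
    have hr : ‖z‖ / θ ≤ 1 := (div_le_one hθ).2 hz.le
    calc ‖coeff m W * z ^ m‖ = (‖coeff m W‖ * θ ^ m) * (‖z‖ / θ) ^ m := by
          rw [norm_mul, norm_pow, div_pow, mul_assoc, mul_div_cancel₀ _ (by positivity)]
      _ ≤ (‖coeff 1 W‖ * θ) * (‖z‖ / θ) ^ 2 :=
          mul_le_mul (hWθ m) (pow_le_pow_of_le_one (by positivity) hr hm2) (by positivity)
            (by positivity)
      _ = ‖coeff 1 W‖ * ‖z‖ ^ 2 / θ := by field_simp
  · rw [pow_one, norm_mul, mul_div_assoc]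
    refine mul_lt_mul_of_pos_left ?_ hW1'
    rw [div_lt_iff₀ hθ, sq]
    exact mul_lt_mul_of_pos_left hz hρ

end Dominance

section Periodic

variable {K : Type*} [NormedField K] [IsUltrametricDist K] {lam : K} {q : ℕ} {f : K⟦X⟧} {θ : ℝ}

theorem linearDominant_fit_sub_X_of_not_dvd (hlam : ‖lam‖ = 1) (hq0 : 0 < q)
    (hq1 : ‖lam ^ q - 1‖ < 1) (hq2 : ∀ j, 0 < j → j < q → ¬ ‖lam ^ j - 1‖ < 1)
    (hf : GaussNormLE 1 1 f) (hf0 : constantCoeff f = 0) (hf1 : coeff 1 f = lam)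
    (hθ0 : 0 ≤ θ) (hθ1 : θ ≤ 1) {ℓ : ℕ} (hℓ : ¬ q ∣ ℓ) : LinearDominant θ (fit f ℓ - X) := by
  have h1 : ‖coeff 1 (fit f ℓ - X)‖ = 1 := by
    simpa [coeff_one_fit hf0, hf1] using norm_pow_sub_one_eq_one_of_not_dvd hlam hq0 hq1 hq2 hℓ
  have h0 : constantCoeff (fit f ℓ - X) = 0 := by simp [constantCoeff_fit hf0]
  have hW : GaussNormLE 1 1 (fit f ℓ - X) :=
    (gaussNormLE_fit zero_le_one hf ℓ).sub zero_le_one (gaussNormLE_X zero_le_one)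
  refine ⟨h0, norm_ne_zero_iff.1 (by rw [h1]; exact one_ne_zero), ?_⟩
  rw [h1, one_mul]
  simpa using gaussNormLE_of_norm_coeff_le (q := 0) hθ0 hθ1 h0 hW
    fun j _ => by simpa using gaussNormLE_one_iff.1 hW j

theorem linearDominant_fit_sub_X_of_dvd (p : ℕ) [Fact p.Prime] [CharP K p] (hlam : ‖lam‖ = 1)
    (hq1 : ‖lam ^ q - 1‖ < 1) (hq2 : ∀ j, 0 < j → j < q → ¬ ‖lam ^ j - 1‖ < 1)
    (hqne : lam ^ q ≠ 1) (hf : GaussNormLE 1 1 f) (hf0 : constantCoeff f = 0)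
    (hf1 : coeff 1 f = lam) (hθ : 0 < θ) (hθq : θ ^ q = ‖lam ^ q - 1‖) {m : ℕ} (hm : m ≠ 0) :
    LinearDominant θ (fit f (q * m) - X) := by
  set δ := ‖lam ^ q - 1‖
  have hδ : 0 < δ := norm_pos_iff.2 (sub_ne_zero.2 hqne)
  have hθ1 : θ < 1 := lt_of_pow_lt_pow_left₀ q zero_le_one (by rw [hθq, one_pow]; exact hq1)
  set g := fit f q
  have hg0 : constantCoeff g = 0 := constantCoeff_fit hf0 q
  have hg : GaussNormLE 1 1 g := gaussNormLE_fit zero_le_one hf q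
  have hgX : GaussNormLE θ (δ * θ) (g - X) := by
    rw [← hθq]
    refine gaussNormLE_of_norm_coeff_le hθ.le hθ1.le (by simp [hg0])
      (hg.sub zero_le_one (gaussNormLE_X zero_le_one)) fun j hj => hθq ▸ ?_
    refine norm_coeff_sub_X_le_of_fcomp_comm hlam (fun j hj0 hjq => ?_) hf hf0 hf1 hg hg0
      (by rw [coeff_one_fit hf0, hf1]) (fcomp_fit_comm hf0 q) j hj
    exact le_antisymm ((norm_pow_sub_one_le hlam.le j).trans (norm_sub_one_le_one hlam.le))
      (not_lt.1 (hq2 j hj0 hjq))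
  obtain ⟨n, k, hk, rfl⟩ : ∃ n k, ¬ p ∣ k ∧ m = p ^ n * k :=
    ⟨_, _, Nat.not_dvd_ordCompl (Fact.out) hm, (Nat.ordProj_mul_ordCompl_eq_self m p).symm⟩
  have hlin : coeff 1 (fit f (q * (p ^ n * k)) - X) = ((lam ^ q) ^ k - 1) ^ p ^ n := by
    rw [sub_pow_char_pow, one_pow, ← pow_mul, ← pow_mul, map_sub, coeff_one_fit hf0, hf1,
      coeff_one_X]
    ring_nf
  have hnorm : ‖coeff 1 (fit f (q * (p ^ n * k)) - X)‖ = δ ^ p ^ n := by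
    rw [hlin, norm_pow, norm_pow_sub_one_eq_of_norm_natCast_eq_one hq1
      (norm_natCast_eq_one_of_not_dvd p hk)]
  refine ⟨by simp [constantCoeff_fit hf0], norm_ne_zero_iff.1 (by rw [hnorm]; positivity), ?_⟩
  rw [hnorm, fit_mul hf0]
  exact gaussNormLE_fit_sub_X p hθ hq1.le hg0 hgX n k

end Periodic

theorem stmt6_general {K : Type*} [NontriviallyNormedField K] [IsUltrametricDist K]
    (p : ℕ) (hp : p.Prime) [CharP K p]
    (lam : K) (hlam : ‖lam‖ = 1)
    (q : ℕ) (hq0 : 0 < q) (hq1 : ‖lam ^ q - 1‖ < 1)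
    (hq2 : ∀ j, 0 < j → j < q → ¬ ‖lam ^ j - 1‖ < 1)
    (hqne : lam ^ q ≠ 1)
    (f : PowerSeries K) (hf : ∀ m, ‖PowerSeries.coeff m f‖ ≤ 1)
    (hf0 : PowerSeries.constantCoeff f = 0) (hf1 : PowerSeries.coeff 1 f = lam) :
    (∃ r : ℝ, 0 < r ∧
      ∀ z₀ : K, ‖z₀‖ < 1 → z₀ ≠ 0 →
        (∃ ℓ : ℕ, 0 < ℓ ∧
          HasSum (fun m : ℕ => (PowerSeries.coeff m (fit f ℓ)) * z₀ ^ m) z₀) →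
        r ≤ ‖z₀‖) ∧
    ∀ z₀ : K, ‖z₀‖ < 1 → z₀ ≠ 0 →
      (∃ ℓ : ℕ, 0 < ℓ ∧
        HasSum (fun m : ℕ => (PowerSeries.coeff m (fit f ℓ)) * z₀ ^ m) z₀) →
      ‖lam ^ q - 1‖ ^ (((p : ℝ) - 1) / ((q : ℝ) * (p : ℝ))) ≤ ‖z₀‖ ∨
        ‖lam ^ q - 1‖ ^ ((1 : ℝ) / (q : ℝ)) ≤ ‖z₀‖ := by
  have : Fact p.Prime := ⟨hp⟩
  have hf' : GaussNormLE 1 1 f := gaussNormLE_one_iff.2 hf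
  set θ := ‖lam ^ q - 1‖ ^ ((1 : ℝ) / (q : ℝ))
  have hδ : 0 < ‖lam ^ q - 1‖ := norm_pos_iff.2 (sub_ne_zero.2 hqne)
  have hθ0 : 0 < θ := Real.rpow_pos_of_pos hδ _
  have hθ1 : θ ≤ 1 := Real.rpow_le_one hδ.le hq1.le (by positivity)
  have hθq : θ ^ q = ‖lam ^ q - 1‖ := by
    rw [← Real.rpow_natCast, ← Real.rpow_mul hδ.le, one_div_mul_cancel (by positivity),
      Real.rpow_one]
  have key (z₀ : K) (hz0 : z₀ ≠ 0)
      (hper : ∃ ℓ, 0 < ℓ ∧ HasSum (fun m => coeff m (fit f ℓ) * z₀ ^ m) z₀) : θ ≤ ‖z₀‖ := by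
    obtain ⟨ℓ, hℓ, hsum⟩ := hper
    by_contra! hz
    have hW : LinearDominant θ (fit f ℓ - X) := by
      by_cases hdvd : q ∣ ℓ
      · obtain ⟨m, rfl⟩ := hdvd
        exact linearDominant_fit_sub_X_of_dvd p hlam hq1 hq2 hqne hf' hf0 hf1 hθ0 hθq
          (by rintro rfl; simp at hℓ)
      · exact linearDominant_fit_sub_X_of_not_dvd hlam hq0 hq1 hq2 hf' hf0 hf1 hθ0.le hθ1 hdvd
    have hX : HasSum (fun m => coeff m (X : K⟦X⟧) * z₀ ^ m) z₀ := by
      convert hasSum_ite_eq 1 z₀ using 2 with m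
      split_ifs with h <;> simp [coeff_X, h]
    exact hW.hasSum_ne_zero hz0 hz (by simpa [sub_mul] using hsum.sub hX) rfl
  exact ⟨⟨θ, hθ0, fun z₀ _ hz0 => key z₀ hz0⟩, fun z₀ _ hz0 hper => Or.inr (key z₀ hz0 hper)⟩

/-- Let `K` be an ultrametric field of positive characteristic `p`, `λ ∈ K` with
`‖λ‖ = 1`, whose reduction has finite order `q` in the residue field, and `λ^q ≠ 1`.
Then for every `f(z) = λz + ⋯ ∈ O_K[[z]]`: there is `r > 0` bounding from below the
absolute values of all periodic points of `f` in `m_K ∖ {0}`; in fact each such point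
`z₀` satisfies `‖z₀‖ ≥ ‖λ^q - 1‖^((p-1)/(q p))` or `‖z₀‖ ≥ ‖λ^q - 1‖^(1/q)`.  In
particular the irrationally indifferent fixed point `z = 0` is isolated as a periodic
point. -/
theorem stmt6 {K : Type*} [NontriviallyNormedField K] [IsUltrametricDist K] [CompleteSpace K]
    (p : ℕ) (hp : p.Prime) [CharP K p]
    (lam : K) (hlam : ‖lam‖ = 1)
    (q : ℕ) (hq0 : 0 < q) (hq1 : ‖lam ^ q - 1‖ < 1)
    (hq2 : ∀ j, 0 < j → j < q → ¬ ‖lam ^ j - 1‖ < 1)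
    (hqne : lam ^ q ≠ 1)
    (f : PowerSeries K) (hf : ∀ m, ‖PowerSeries.coeff m f‖ ≤ 1)
    (hf0 : PowerSeries.constantCoeff f = 0) (hf1 : PowerSeries.coeff 1 f = lam) :
    (∃ r : ℝ, 0 < r ∧
      ∀ z₀ : K, ‖z₀‖ < 1 → z₀ ≠ 0 →
        (∃ ℓ : ℕ, 0 < ℓ ∧
          HasSum (fun m : ℕ => (PowerSeries.coeff m (fit f ℓ)) * z₀ ^ m) z₀) →
        r ≤ ‖z₀‖) ∧
    ∀ z₀ : K, ‖z₀‖ < 1 → z₀ ≠ 0 →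
      (∃ ℓ : ℕ, 0 < ℓ ∧
        HasSum (fun m : ℕ => (PowerSeries.coeff m (fit f ℓ)) * z₀ ^ m) z₀) →
      ‖lam ^ q - 1‖ ^ (((p : ℝ) - 1) / ((q : ℝ) * (p : ℝ))) ≤ ‖z₀‖ ∨
        ‖lam ^ q - 1‖ ^ ((1 : ℝ) / (q : ℝ)) ≤ ‖z₀‖ :=
  stmt6_general p hp lam hlam q hq0 hq1 hq2 hqne f hf hf0 hf1
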